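/- Let θ, α be nonconstant inner functions and let D = D_φ^{θ,α} with φ ∈ L^∞(𝕋). Then φ ∈ H^∞ (i.e., D is an analytic asymmetric dual truncated Toeplitz operator) if and only if P⁻(z·D(conj z)) = 0, equivalently D(conj z) is orthogonal to conj(z)·H²₋ in L²(𝕋). -/

import Mathlib

open MeasureTheory Complex ComplexConjugate

noncomputable section

instance : Fact (0 < 2 * Real.pi) := ⟨by positivity⟩

abbrev 𝕋 : Type := AddCircle (2 * Real.pi)

abbrev m : Measure 𝕋 := AddCircle.haarAddCircle

def e : 𝕋 → ℂ := fun x => fourier 1 x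

def Hardy2 : Set (𝕋 → ℂ) :=
  {f | MemLp f 2 m ∧ ∀ n : ℤ, n < 0 → fourierCoeff f n = 0}

def Hardy2neg : Set (𝕋 → ℂ) :=
  {f | MemLp f 2 m ∧ ∀ n : ℤ, 0 ≤ n → fourierCoeff f n = 0}

def thetaH2 (θ : 𝕋 → ℂ) : Set (𝕋 → ℂ) :=
  {g | ∃ h ∈ Hardy2, g =ᵐ[m] fun x => θ x * h x}

def Kmodel (θ : 𝕋 → ℂ) : Set (𝕋 → ℂ) :=
  {f | f ∈ Hardy2 ∧ ∀ g ∈ thetaH2 θ, ∫ x, f x * conj (g x) ∂m = 0}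

def Kperp (θ : 𝕋 → ℂ) : Set (𝕋 → ℂ) :=
  {f | ∃ g ∈ thetaH2 θ, ∃ h ∈ Hardy2neg, f =ᵐ[m] fun x => g x + h x}

def Cfun (θ f : 𝕋 → ℂ) : 𝕋 → ℂ := fun x => θ x * conj (e x) * conj (f x)

def Jfun (f : 𝕋 → ℂ) : 𝕋 → ℂ := fun x => conj (e x) * conj (f x)

def IsInner (θ : 𝕋 → ℂ) : Prop :=
  MemLp θ ⊤ m ∧ (∀ᵐ x ∂m, ‖θ x‖ = 1) ∧ ∀ n : ℤ, n < 0 → fourierCoeff θ n = 0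

def NCInner (θ : 𝕋 → ℂ) : Prop := IsInner θ ∧ ¬∃ c : ℂ, θ =ᵐ[m] fun _ => c

def IsPneg (f g : 𝕋 → ℂ) : Prop :=
  g ∈ Hardy2neg ∧ ∀ n : ℤ, n < 0 → fourierCoeff g n = fourierCoeff f n

def IsPpos (f g : 𝕋 → ℂ) : Prop :=
  g ∈ Hardy2 ∧ ∀ n : ℤ, 0 ≤ n → fourierCoeff g n = fourierCoeff f n

def IsProjOn (S : Set (𝕋 → ℂ)) (f g : 𝕋 → ℂ) : Prop :=
  g ∈ S ∧ ∀ u ∈ S, ∫ x, (f x - g x) * conj (u x) ∂m = 0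


-- ===== auxiliary lemmas =====

lemma fourierCoeff_eq_integral'' (f : 𝕋 → ℂ) (n : ℤ) :
    fourierCoeff f n = ∫ x, fourier (-n) x * f x ∂m := by
  simp only [fourierCoeff, smul_eq_mul]

lemma fourierCoeff_congr_ae'' {f g : 𝕋 → ℂ} (h : f =ᵐ[m] g) (n : ℤ) :
    fourierCoeff f n = fourierCoeff g n := by
  simp only [fourierCoeff]
  exact integral_congr_ae (h.mono fun x hx => by beta_reduce; rw [hx])

lemma integral_fourier_eq (j : ℤ) :
    ∫ x : 𝕋, fourier j x ∂m = if j = 0 then 1 else 0 := by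
  split_ifs with h
  · subst h
    simp [fourier_zero]
  · exact integral_eq_zero_of_add_right_eq_neg
      (fourier_add_half_inv_index h (by positivity))

lemma fourierCoeff_fourier_mul (f : 𝕋 → ℂ) (k n : ℤ) :
    fourierCoeff (fun x => fourier k x * f x) n = fourierCoeff f (n - k) := by
  rw [fourierCoeff_eq_integral'', fourierCoeff_eq_integral'']
  refine integral_congr_ae (Filter.Eventually.of_forall fun x => ?_)
  beta_reduce
  rw [← mul_assoc, ← fourier_add, show -n + k = -(n - k) by ring]

lemma fourierCoeff_fourier'' (k n : ℤ) :
    fourierCoeff (fourier k : 𝕋 → ℂ) n = if k = n then 1 else 0 := by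
  rw [fourierCoeff_eq_integral'']
  simp_rw [← fourier_add]
  rw [integral_fourier_eq]
  by_cases h : k = n
  · subst h; simp
  · have h2 : -n + k ≠ 0 := by omega
    simp [h, h2]

lemma memℒp_fourier (k : ℤ) {p : ENNReal} : MemLp (fourier k : 𝕋 → ℂ) p m := by
  have h := memLp_top_of_bound ((fourier k).continuous.aestronglyMeasurable (μ := m)) 1
    (Filter.Eventually.of_forall fun x => le_of_eq (Circle.norm_coe _))
  exact h.mono_exponent le_top

lemma memℒp_fourier_mul (k : ℤ) {f : 𝕋 → ℂ} {p : ENNReal} (hf : MemLp f p m) :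
    MemLp (fun x => fourier k x * f x) p m := by
  have h := MemLp.smul (p := ⊤) (r := p) hf (memℒp_fourier k)
  exact h.ae_eq (Filter.Eventually.of_forall fun x => by
    simp [Pi.smul_apply, smul_eq_mul, mul_comm])

lemma integral_mul_conj_fourier (f : 𝕋 → ℂ) (n : ℤ) :
    ∫ x, f x * conj (fourier n x) ∂m = fourierCoeff f n := by
  rw [fourierCoeff_eq_integral'']
  refine integral_congr_ae (Filter.Eventually.of_forall fun x => ?_)
  beta_reduce
  rw [fourier_neg]; ring

lemma fourier_mem_hardy2neg {n : ℤ} (hn : n < 0) : (fourier n : 𝕋 → ℂ) ∈ Hardy2neg := by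
  refine ⟨memℒp_fourier n, fun k hk => ?_⟩
  rw [fourierCoeff_fourier'']
  have : n ≠ k := by omega
  simp [this]

lemma hardy2neg_subset_Kperp (α : 𝕋 → ℂ) : Hardy2neg ⊆ Kperp α := by
  intro w hw
  refine ⟨(fun _ => 0), ⟨(fun _ => 0), ⟨MemLp.zero', fun n _ => ?_⟩, ?_⟩, w, hw, ?_⟩
  · rw [fourierCoeff_eq_integral'']
    simp
  · exact Filter.Eventually.of_forall fun x => by simp
  · exact Filter.Eventually.of_forall fun x => by simp

lemma memℒp_of_mem_Kperp {α u : 𝕋 → ℂ} (hα : MemLp α ⊤ m) (hu : u ∈ Kperp α) :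
    MemLp u 2 m := by
  obtain ⟨g, ⟨h, hh, hg⟩, w, hw, huw⟩ := hu
  have hgh : MemLp (fun x => α x * h x) 2 m := by
    have := MemLp.smul (p := ⊤) (r := 2) hh.1 hα
    exact this.ae_eq (Filter.Eventually.of_forall fun x => by
      simp [Pi.smul_apply, smul_eq_mul, mul_comm])
  have hg2 : MemLp g 2 m := hgh.ae_eq hg.symm
  exact ((hg2.add hw.1).ae_eq (huw.mono fun x hx => by simp [hx])).ae_eq
    (Filter.Eventually.of_forall fun x => rfl)

lemma parseval_orth {f w : 𝕋 → ℂ} (hf2 : MemLp f 2 m) (hw2 : MemLp w 2 m)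
    (hf : ∀ n : ℤ, n < 0 → fourierCoeff f n = 0) (hw : ∀ n : ℤ, 0 ≤ n → fourierCoeff w n = 0) :
    ∫ x, f x * conj (w x) ∂m = 0 := by
  set F : Lp ℂ 2 m := hf2.toLp f with hF
  set W : Lp ℂ 2 m := hw2.toLp w with hW
  have h1 : ∫ x, f x * conj (w x) ∂m = ∫ x, conj (W x) * F x ∂m := by
    refine integral_congr_ae ?_
    filter_upwards [hf2.coeFn_toLp, hw2.coeFn_toLp] with x hx1 hx2
    rw [hx1, hx2]; ring
  have h2 : (inner ℂ W F : ℂ) = ∫ x, conj (W x) * F x ∂m := by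
    rw [MeasureTheory.L2.inner_def]
    simp only [RCLike.inner_apply']
  have hrF : ∀ n : ℤ, fourierBasis.repr F n = fourierCoeff f n := fun n => by
    rw [fourierBasis_repr]
    exact fourierCoeff_congr_ae'' hf2.coeFn_toLp n
  have hrW : ∀ n : ℤ, fourierBasis.repr W n = fourierCoeff w n := fun n => by
    rw [fourierBasis_repr]
    exact fourierCoeff_congr_ae'' hw2.coeFn_toLp n
  have h3 : (inner ℂ W F : ℂ) = ∑' n : ℤ, conj (fourierBasis.repr W n) * fourierBasis.repr F n := by
    rw [← fourierBasis.repr.inner_map_map W F, lp.inner_eq_tsum]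
    simp only [RCLike.inner_apply']
  have h4 : (inner ℂ W F : ℂ) = 0 := by
    rw [h3]
    have : ∀ n : ℤ, conj (fourierBasis.repr W n) * fourierBasis.repr F n = 0 := fun n => by
      rcases lt_or_ge n 0 with h | h
      · rw [hrF n, hf n h, mul_zero]
      · rw [hrW n, hw n h, map_zero, zero_mul]
    rw [tsum_congr this, tsum_zero]
  rw [h1, ← h2, h4]

-- ===== end auxiliary lemmas =====

/-- D_φ^{θ,α} is analytic (φ ∈ H^∞) iff P⁻(z·D(conj z)) = 0 iff D(conj z) ⊥ conj(z)·H²₋. -/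
theorem stmt19 (θ α φ : 𝕋 → ℂ) (hθ : NCInner θ) (hα : NCInner α) (hφ : MemLp φ ⊤ m)
    (u : 𝕋 → ℂ) (hu : IsProjOn (Kperp α) (fun x => φ x * conj (e x)) u) :
    ((∀ n : ℤ, n < 0 → fourierCoeff φ n = 0) ↔
      ∀ n : ℤ, n < 0 → fourierCoeff (fun x => e x * u x) n = 0) ∧
    ((∀ n : ℤ, n < 0 → fourierCoeff φ n = 0) ↔
      ∀ w ∈ Hardy2neg, ∫ x, u x * conj (conj (e x) * w x) ∂m = 0) := by
  have u2 : MemLp u 2 m := memℒp_of_mem_Kperp hα.1.1 hu.1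
  -- integrability facts
  have hInt1 : ∀ n : ℤ, Integrable (fun x => (φ x * conj (e x)) * conj (fourier n x)) m := by
    intro n
    have h1 : MemLp (fun x => φ x * conj (e x)) 2 m := by
      have := memℒp_fourier_mul (-1) (hφ.mono_exponent (le_top : (2:ENNReal) ≤ ⊤))
      exact this.ae_eq (Filter.Eventually.of_forall fun x => by
        simp only [e, fourier_neg, ← fourier_neg]
        ring)
    have h2 : MemLp (fun x => fourier (-n) x * (φ x * conj (e x))) 2 m :=
      memℒp_fourier_mul (-n) h1
    have h3 := h2.ae_eq (Filter.Eventually.of_forall (fun x => by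
      beta_reduce; rw [fourier_neg]; ring) :
        (fun x => fourier (-n) x * (φ x * conj (e x))) =ᵐ[m]
          (fun x => (φ x * conj (e x)) * conj (fourier n x)))
    exact h3.integrable (by norm_num)
  have hInt2 : ∀ n : ℤ, Integrable (fun x => u x * conj (fourier n x)) m := by
    intro n
    have h2 : MemLp (fun x => fourier (-n) x * u x) 2 m := memℒp_fourier_mul (-n) u2
    have h3 := h2.ae_eq (Filter.Eventually.of_forall (fun x => by
      beta_reduce; rw [fourier_neg]; ring) :
        (fun x => fourier (-n) x * u x) =ᵐ[m] (fun x => u x * conj (fourier n x)))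
    exact h3.integrable (by norm_num)
  -- key coefficient identity from the projection property
  have keyD : ∀ n : ℤ, n < 0 → fourierCoeff u n = fourierCoeff (fun x => φ x * conj (e x)) n := by
    intro n hn
    have H := hu.2 (fourier n) (hardy2neg_subset_Kperp α (fourier_mem_hardy2neg hn))
    have Hsplit : ∫ x, ((φ x * conj (e x)) * conj (fourier n x)
        - u x * conj (fourier n x)) ∂m = 0 := by
      rw [← H]
      refine integral_congr_ae (Filter.Eventually.of_forall fun x => ?_)
      ring
    rw [integral_sub (hInt1 n) (hInt2 n), sub_eq_zero] at Hsplit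
    rw [integral_mul_conj_fourier, integral_mul_conj_fourier] at Hsplit
    exact Hsplit.symm
  -- coefficients of φ in terms of u
  have phiEq : ∀ n : ℤ, fourierCoeff φ n
      = fourierCoeff (fun x => φ x * conj (e x)) (n - 1) := by
    intro n
    have h1 : φ = fun x => fourier 1 x * (φ x * conj (e x)) := by
      funext x
      simp only [e, fourier_neg, ← fourier_neg]
      rw [show (fourier (1:ℤ)) x * (φ x * (fourier (-1:ℤ)) x) =
        ((fourier (1:ℤ)) x * (fourier (-1:ℤ)) x) * φ x by ring, ← fourier_add,
        show (1:ℤ) + -1 = 0 by ring, fourier_zero, one_mul]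
    conv_lhs => rw [h1]
    exact fourierCoeff_fourier_mul _ 1 n
  have euEq : ∀ n : ℤ, fourierCoeff (fun x => e x * u x) n = fourierCoeff u (n - 1) := by
    intro n
    exact fourierCoeff_fourier_mul u 1 n
  have phiU : ∀ n : ℤ, n < 0 → fourierCoeff φ n = fourierCoeff u (n - 1) := by
    intro n hn
    rw [phiEq n, ← keyD (n - 1) (by omega)]
  have iff1 : (∀ n : ℤ, n < 0 → fourierCoeff φ n = 0) ↔
      (∀ n : ℤ, n < 0 → fourierCoeff (fun x => e x * u x) n = 0) := by
    constructor
    · intro h n hn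
      rw [euEq n, ← phiU n hn]
      exact h n hn
    · intro h n hn
      rw [phiU n hn, ← euEq n]
      exact h n hn
  refine ⟨iff1, iff1.trans ?_⟩
  have integrand_eq : ∀ (w : 𝕋 → ℂ) (x : 𝕋),
      u x * conj (conj (e x) * w x) = (e x * u x) * conj (w x) := by
    intro w x
    rw [map_mul, Complex.conj_conj]
    ring
  constructor
  · intro h w hw
    have heu : MemLp (fun x => e x * u x) 2 m := memℒp_fourier_mul 1 u2
    have := parseval_orth heu hw.1 h hw.2
    rw [← this]
    exact integral_congr_ae (Filter.Eventually.of_forall fun x => integrand_eq w x)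
  · intro h n hn
    have H := h (fourier n) (fourier_mem_hardy2neg hn)
    rw [integral_congr_ae (Filter.Eventually.of_forall fun x => integrand_eq (fourier n) x),
      integral_mul_conj_fourier] at H
    exact H
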